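/- Let E be a Banach space over 𝕂 (= ℝ or ℂ), 1 ≤ r ≤ 2, and C > 0, and suppose that every continuous bilinear form B : E × E → 𝕂 is absolutely (1;r,r)-summing with π_{(1;r,r)}(B) ≤ C‖B‖. Then: (i) for every even n ≥ 2, every continuous n-linear form A : E^n → 𝕂 is absolutely (1;r,…,r)-summing with π_{(1;r,…,r)}(A) ≤ C^{n/2}‖A‖; (ii) for every odd n ≥ 3, every continuous n-linear form A : E^n → 𝕂 is absolutely (r;r,…,r)-summing with π_{(r;r,…,r)}(A) ≤ C^{(n−1)/2}‖A‖. -/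

import Mathlib

/-!
Write an `(n + 2)`-linear form as an `n`-linear map `P` into bilinear forms and fix weights
`c_j ≥ 0`. If every `n`-linear form `G` satisfies `∑_j c_j |G(y_j)| ≤ D‖G‖`, then each bilinear
form `B_σ = ∑_j σ_j c_j P(y_j)`, `σ ∈ {±1}^m`, has norm at most `D‖P‖`, and averaging
`∑_k |B_σ(z_k)|` over all signs `σ` isolates the diagonal `∑_k c_k |P(y_k)(z_k)|`. So the bilinear
hypothesis lifts a weighted bound from `n` to `n + 2` variables at the cost of a factor `C`.
With `c_j = 1` this is the even induction step. For the `ℓ_p`-bound take `c_j = |A(x_j)|^(p-1)`: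
Hölder's inequality turns the `ℓ_p`-bound in `n` variables into the weighted bound, and
`∑_j c_j |A(x_j)| = ∑_j |A(x_j)|^p`. The induction starts at `n = 2` (the hypothesis) and at
`n = 1`, where the `ℓ_r`-bound is the definition of the weak `ℓ_r` norm.
-/

open scoped BigOperators NNReal ENNReal

/-- The weak `ℓ_r` norm of a finite family `(x_j)` in a normed space:
`sup_{‖φ‖ ≤ 1} (∑_j ‖φ(x_j)‖^r)^(1/r)`. -/
noncomputable def weakNorm (𝕜 : Type*) [RCLike 𝕜] {E : Type*} [NormedAddCommGroup E]
    [NormedSpace 𝕜 E] (r : ℝ) {m : ℕ} (x : Fin m → E) : ℝ :=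
  ⨆ φ : {φ : E →L[𝕜] 𝕜 // ‖φ‖ ≤ 1}, (∑ j, ‖φ.1 (x j)‖ ^ r) ^ (1 / r)

namespace Real

lemma rpow_sub_one_mul_self {p a : ℝ} (hp : p ≠ 0) (ha : 0 ≤ a) : a ^ (p - 1) * a = a ^ p := by
  rw [← rpow_add_one' ha (by simpa using hp), sub_add_cancel]

lemma sum_mul_rpow_rpow_one_div {ι : Type*} (s : Finset ι) {r t : ℝ} (hr : r ≠ 0)
    (ht : 0 ≤ t) {a : ι → ℝ} (ha : ∀ i, 0 ≤ a i) :
    (∑ i ∈ s, (t * a i) ^ r) ^ (1 / r) = t * (∑ i ∈ s, a i ^ r) ^ (1 / r) := by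
  simp_rw [mul_rpow ht (ha _), ← Finset.mul_sum]
  rw [mul_rpow (rpow_nonneg ht r) (Finset.sum_nonneg fun i _ => rpow_nonneg (ha i) r),
    ← rpow_mul ht, mul_one_div_cancel hr, rpow_one]

lemma sum_rpow_sub_one_mul_le {ι : Type*} (s : Finset ι) {p : ℝ} (hp : 1 ≤ p) {a b : ι → ℝ}
    (ha : ∀ i, 0 ≤ a i) (hb : ∀ i, 0 ≤ b i) :
    ∑ i ∈ s, a i ^ (p - 1) * b i
      ≤ (∑ i ∈ s, a i ^ p) ^ (1 - 1 / p) * (∑ i ∈ s, b i ^ p) ^ (1 / p) := by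
  rcases hp.eq_or_lt with rfl | hp
  · simp
  have hpq : (p / (p - 1)).HolderConjugate p := (HolderConjugate.conjExponent hp).symm
  convert inner_le_Lp_mul_Lq_of_nonneg s hpq (f := fun i => a i ^ (p - 1))
    (fun i _ => rpow_nonneg (ha i) _) (fun i _ => hb i) using 3
  · refine Finset.sum_congr rfl fun i _ => ?_
    rw [← rpow_mul (ha i), mul_div_cancel₀ _ (by linarith)]
  · field_simp

lemma rpow_one_div_le_of_le_mul_rpow {p S L : ℝ} (hp : 0 < p) (hS : 0 ≤ S) (hL : 0 ≤ L)
    (h : S ≤ L * S ^ (1 - 1 / p)) : S ^ (1 / p) ≤ L := by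
  rcases hS.eq_or_lt with rfl | hS
  · rwa [zero_rpow (by positivity)]
  have hsplit : S = S ^ (1 / p) * S ^ (1 - 1 / p) := by
    rw [← rpow_add hS, add_sub_cancel, rpow_one]
  nth_rw 1 [hsplit] at h
  exact le_of_mul_le_mul_right h (rpow_pos_of_pos hS _)

end Real

lemma RCLike.norm_intCast_units {𝕜 : Type*} [RCLike 𝕜] (u : ℤˣ) : ‖((u : ℤ) : 𝕜)‖ = 1 := by
  rcases Int.units_eq_one_or u with rfl | rfl <;> simp

lemma Int.sum_units_mul_units {ι : Type*} [Fintype ι] [DecidableEq ι] (j k : ι) :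
    ∑ σ : ι → ℤˣ, ((σ j * σ k : ℤˣ) : ℤ)
      = if j = k then (Fintype.card (ι → ℤˣ) : ℤ) else 0 := by
  split_ifs with hjk
  · simp [hjk, Int.units_mul_self]
  · set τ : ι → ℤˣ := Pi.mulSingle j (-1)
    have hflip : ∀ σ : ι → ℤˣ,
        (((τ * σ) j * (τ * σ) k : ℤˣ) : ℤ) = -((σ j * σ k : ℤˣ) : ℤ) := fun σ => by
      simp [τ, Ne.symm hjk]
    have := Equiv.sum_comp (Equiv.mulLeft τ) (fun σ : ι → ℤˣ => ((σ j * σ k : ℤˣ) : ℤ))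
    simp only [Equiv.coe_mulLeft, hflip, Finset.sum_neg_distrib] at this
    linarith

/-- Averaging over the signs `σ`, with unimodular phases `ε_k` making `ε_k f_k(a_k) = |f_k(a_k)|`,
`∑_σ ∑_k ε_k σ_k ∑_j σ_j f_j(a_k) = 2^|ι| ∑_k |f_k(a_k)|`. -/
lemma sum_norm_apply_self_le_of_forall_signs {𝕜 ι α : Type*} [RCLike 𝕜] [Fintype ι]
    [DecidableEq ι] (f : ι → α → 𝕜) (a : ι → α) {M : ℝ}
    (h : ∀ σ : ι → ℤˣ, ∑ k, ‖∑ j, ((σ j : ℤ) : 𝕜) * f j (a k)‖ ≤ M) :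
    ∑ k, ‖f k (a k)‖ ≤ M := by
  choose ε hε_norm hε using fun k => RCLike.exists_norm_eq_mul_self (f k (a k))
  set N : ℕ := Fintype.card (ι → ℤˣ)
  have hN : (0 : ℝ) < N := by simp [N]
  have orth : ∀ k j : ι, ∑ σ : ι → ℤˣ, ((σ k : ℤ) : 𝕜) * ((σ j : ℤ) : 𝕜)
      = if k = j then (N : 𝕜) else 0 := fun k j => by
    have := congrArg (Int.cast : ℤ → 𝕜) (Int.sum_units_mul_units k j)
    push_cast at this
    rw [this]
  have key : ∑ σ : ι → ℤˣ, ∑ k, ε k * ((σ k : ℤ) : 𝕜) * ∑ j, ((σ j : ℤ) : 𝕜) * f j (a k)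
      = (N : 𝕜) * ((∑ k, ‖f k (a k)‖ : ℝ) : 𝕜) := by
    calc _ = ∑ k, ∑ j, ε k * (∑ σ : ι → ℤˣ, ((σ k : ℤ) : 𝕜) * ((σ j : ℤ) : 𝕜)) * f j (a k) := by
          rw [Finset.sum_comm]
          simp only [Finset.mul_sum, Finset.sum_mul]
          refine Finset.sum_congr rfl fun k _ => ?_
          rw [Finset.sum_comm]
          exact Finset.sum_congr rfl fun j _ => Finset.sum_congr rfl fun σ _ => by ring
      _ = ∑ k, (N : 𝕜) * (ε k * f k (a k)) := by
          simp only [orth, mul_ite, ite_mul, mul_zero, zero_mul, Finset.sum_ite_eq,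
            Finset.mem_univ, if_true]
          exact Finset.sum_congr rfl fun k _ => by ring
      _ = _ := by simp [← hε, Finset.mul_sum]
  have hbound : (N : ℝ) * ∑ k, ‖f k (a k)‖ ≤ N * M := by
    calc (N : ℝ) * ∑ k, ‖f k (a k)‖
        = ‖∑ σ : ι → ℤˣ, ∑ k, ε k * ((σ k : ℤ) : 𝕜) * ∑ j, ((σ j : ℤ) : 𝕜) * f j (a k)‖ := by
          rw [key, norm_mul, RCLike.norm_natCast, RCLike.norm_ofReal,
            abs_of_nonneg (Finset.sum_nonneg fun k _ => norm_nonneg _)]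
      _ ≤ ∑ σ : ι → ℤˣ, ∑ k, ‖∑ j, ((σ j : ℤ) : 𝕜) * f j (a k)‖ := by
          refine (norm_sum_le _ _).trans (Finset.sum_le_sum fun σ _ => ?_)
          refine (norm_sum_le _ _).trans_eq (Finset.sum_congr rfl fun k _ => ?_)
          rw [norm_mul, norm_mul, hε_norm, RCLike.norm_intCast_units, one_mul, one_mul]
      _ ≤ ∑ _σ : ι → ℤˣ, M := Finset.sum_le_sum fun σ _ => h σ
      _ = N * M := by simp [N]
  exact le_of_mul_le_mul_left hbound hN

section WeakNorm

variable {𝕜 : Type*} [RCLike 𝕜] {E : Type*} [NormedAddCommGroup E] [NormedSpace 𝕜 E]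
  {r : ℝ} {m : ℕ}

lemma weakNorm_nonneg (x : Fin m → E) : 0 ≤ weakNorm 𝕜 r x :=
  Real.iSup_nonneg fun _ => by positivity

lemma le_weakNorm (hr : 0 < r) (x : Fin m → E) {φ : E →L[𝕜] 𝕜} (hφ : ‖φ‖ ≤ 1) :
    (∑ j, ‖φ (x j)‖ ^ r) ^ (1 / r) ≤ weakNorm 𝕜 r x := by
  refine le_ciSup (f := fun ψ : {ψ : E →L[𝕜] 𝕜 // ‖ψ‖ ≤ 1} => (∑ j, ‖ψ.1 (x j)‖ ^ r) ^ (1 / r))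
    ⟨(∑ j, ‖x j‖ ^ r) ^ (1 / r), ?_⟩ ⟨φ, hφ⟩
  rintro _ ⟨ψ, rfl⟩
  dsimp only
  gcongr with j
  exact ψ.1.le_of_opNorm_le ψ.2 _ |>.trans_eq (one_mul _)

lemma rpow_sum_norm_apply_le_mul_weakNorm (hr : 0 < r) (x : Fin m → E) (φ : E →L[𝕜] 𝕜) :
    (∑ j, ‖φ (x j)‖ ^ r) ^ (1 / r) ≤ ‖φ‖ * weakNorm 𝕜 r x := by
  rcases (norm_nonneg φ).eq_or_lt with hφ | hφ
  · rw [eq_comm, norm_eq_zero] at hφ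
    simp [hφ, Real.zero_rpow hr.ne', Real.zero_rpow (inv_ne_zero hr.ne')]
  set ψ : E →L[𝕜] 𝕜 := ((‖φ‖⁻¹ : ℝ) : 𝕜) • φ
  have hψ : ‖ψ‖ ≤ 1 := by simp [ψ, norm_smul, inv_mul_cancel₀ hφ.ne']
  have hφψ : ∀ j, ‖φ (x j)‖ = ‖φ‖ * ‖ψ (x j)‖ := fun j => by
    simp [ψ, mul_inv_cancel_left₀ hφ.ne']
  simp_rw [hφψ]
  rw [Real.sum_mul_rpow_rpow_one_div _ hr.ne' hφ.le fun _ => norm_nonneg _]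
  gcongr
  exact le_weakNorm hr x hψ

end WeakNorm

namespace ContinuousMultilinearMap

variable {𝕜 : Type*} [RCLike 𝕜] {E G : Type*} [NormedAddCommGroup E] [NormedSpace 𝕜 E]
  [NormedAddCommGroup G] [NormedSpace 𝕜 G]

noncomputable def curryFinAdd {n k : ℕ}
    (A : ContinuousMultilinearMap 𝕜 (fun _ : Fin (n + k) => E) G) :
    ContinuousMultilinearMap 𝕜 (fun _ : Fin n => E)
      (ContinuousMultilinearMap 𝕜 (fun _ : Fin k => E) G) :=
  (A.domDomCongr finSumFinEquiv.symm).currySum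

@[simp] lemma curryFinAdd_apply {n k : ℕ}
    (A : ContinuousMultilinearMap 𝕜 (fun _ : Fin (n + k) => E) G)
    (y : Fin n → E) (z : Fin k → E) : A.curryFinAdd y z = A (Fin.append y z) := by
  refine congrArg A (funext fun i => ?_)
  induction i using Fin.addCases <;> simp

@[simp] lemma norm_curryFinAdd {n k : ℕ}
    (A : ContinuousMultilinearMap 𝕜 (fun _ : Fin (n + k) => E) G) :
    ‖A.curryFinAdd‖ = ‖A‖ :=
  ((currySumEquiv 𝕜 (Fin n) (Fin k) E G).norm_map _).trans (norm_domDomCongr 𝕜 E G _ A)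

lemma norm_apply_compContinuousMultilinearMap_le {ι κ : Type*} [Fintype ι] [Fintype κ]
    (P : ContinuousMultilinearMap 𝕜 (fun _ : ι => E)
      (ContinuousMultilinearMap 𝕜 (fun _ : κ => E) G)) (g : κ → E) :
    ‖(ContinuousMultilinearMap.apply 𝕜 (fun _ : κ => E) G g).compContinuousMultilinearMap P‖
      ≤ ‖P‖ * ∏ i, ‖g i‖ :=
  opNorm_le_bound (by positivity) fun y =>
    ((P y).le_of_opNorm_le (P.le_opNorm y) g).trans_eq (by ring)

end ContinuousMultilinearMap

section Summing

variable {𝕜 : Type*} [RCLike 𝕜] {E : Type*} [NormedAddCommGroup E] [NormedSpace 𝕜 E]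

lemma sum_mul_norm_apply_apply_le {ι κ J : Type*} [Fintype ι] [Fintype κ] [Fintype J]
    [DecidableEq J]
    (P : ContinuousMultilinearMap 𝕜 (fun _ : ι => E)
      (ContinuousMultilinearMap 𝕜 (fun _ : κ => E) 𝕜))
    (y : J → ι → E) (z : J → κ → E) {c : J → ℝ} (hc : ∀ j, 0 ≤ c j) {K D : ℝ}
    (hK : 0 ≤ K) (hD : 0 ≤ D)
    (hB : ∀ B : ContinuousMultilinearMap 𝕜 (fun _ : κ => E) 𝕜, ∑ j, ‖B (z j)‖ ≤ K * ‖B‖)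
    (hG : ∀ G : ContinuousMultilinearMap 𝕜 (fun _ : ι => E) 𝕜,
      ∑ j, c j * ‖G (y j)‖ ≤ D * ‖G‖) :
    ∑ j, c j * ‖P (y j) (z j)‖ ≤ K * (D * ‖P‖) := by
  set B : (J → ℤˣ) → ContinuousMultilinearMap 𝕜 (fun _ : κ => E) 𝕜 :=
    fun σ => ∑ j, (((σ j : ℤ) : 𝕜) * c j) • P (y j)
  have hB_norm : ∀ σ, ‖B σ‖ ≤ D * ‖P‖ := fun σ =>
    ContinuousMultilinearMap.opNorm_le_bound (by positivity) fun g => by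
      set Pg := (ContinuousMultilinearMap.apply 𝕜 (fun _ : κ => E) 𝕜 g).compContinuousMultilinearMap
        P
      calc ‖B σ g‖ = ‖∑ j, (((σ j : ℤ) : 𝕜) * c j) * Pg (y j)‖ := by simp [B, Pg]
        _ ≤ ∑ j, c j * ‖Pg (y j)‖ := by
            refine (norm_sum_le _ _).trans_eq (Finset.sum_congr rfl fun j _ => ?_)
            simp [RCLike.norm_intCast_units, abs_of_nonneg (hc j)]
        _ ≤ D * ‖Pg‖ := hG Pg
        _ ≤ D * ‖P‖ * ∏ i, ‖g i‖ := by
            rw [mul_assoc]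
            gcongr
            exact P.norm_apply_compContinuousMultilinearMap_le g
  have := sum_norm_apply_self_le_of_forall_signs (fun j g => (c j : 𝕜) * P (y j) g) z
    fun σ => calc
      ∑ k, ‖∑ j, ((σ j : ℤ) : 𝕜) * ((c j : 𝕜) * P (y j) (z k))‖ = ∑ k, ‖B σ (z k)‖ := by
        simp [B, mul_assoc]
      _ ≤ K * ‖B σ‖ := hB (B σ)
      _ ≤ K * (D * ‖P‖) := by gcongr; exact hB_norm σ
  simpa [abs_of_nonneg (hc _)] using this

/-- Every continuous `n`-linear form `A` on `E` is absolutely `(p; r, …, r)`-summing with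
`π_{(p;r,…,r)}(A) ≤ K‖A‖`. -/
def HasSummingConst (𝕜 : Type*) [RCLike 𝕜] (E : Type*) [NormedAddCommGroup E]
    [NormedSpace 𝕜 E] (p r : ℝ) (n : ℕ) (K : ℝ) : Prop :=
  ∀ (A : ContinuousMultilinearMap 𝕜 (fun _ : Fin n => E) 𝕜) (m : ℕ) (x : Fin n → Fin m → E),
    (∑ j, ‖A (fun i => x i j)‖ ^ p) ^ (1 / p) ≤ K * ‖A‖ * ∏ i, weakNorm 𝕜 r (x i)

variable {p r C K : ℝ} {n : ℕ}

lemma hasSummingConst_one (hr : 0 < r) : HasSummingConst 𝕜 E r r 1 1 := by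
  intro A m x
  have hA : ∀ j, A (fun i => x i j) = continuousMultilinearCurryFin1 𝕜 E 𝕜 A (x 0 j) :=
    fun j => by
      rw [continuousMultilinearCurryFin1_apply]
      exact congrArg A (funext fun i => by rw [Fin.eq_zero i]; rfl)
  simp_rw [hA, Fin.prod_univ_one, one_mul]
  exact (rpow_sum_norm_apply_le_mul_weakNorm hr _ _).trans_eq (by rw [LinearIsometryEquiv.norm_map])

lemma HasSummingConst.add_two (hp : 1 ≤ p) (hC : 0 ≤ C) (hK : 0 ≤ K)
    (hbil : HasSummingConst 𝕜 E 1 r 2 C) (h : HasSummingConst 𝕜 E p r n K) :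
    HasSummingConst 𝕜 E p r (n + 2) (C * K) := by
  intro A m x
  set N : Fin m → ℝ := fun j => ‖A (fun i => x i j)‖
  set S : ℝ := ∑ j, N j ^ p
  set y : Fin m → Fin n → E := fun j i => x (Fin.castAdd 2 i) j
  set z : Fin m → Fin 2 → E := fun j i => x (Fin.natAdd n i) j
  set W : ℝ := ∏ i : Fin n, weakNorm 𝕜 r (x (Fin.castAdd 2 i))
  set V : ℝ := ∏ i : Fin 2, weakNorm 𝕜 r (x (Fin.natAdd n i))
  have hW : 0 ≤ W := Finset.prod_nonneg fun i _ => weakNorm_nonneg _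
  have hV : 0 ≤ V := Finset.prod_nonneg fun i _ => weakNorm_nonneg _
  have hN : ∀ j, 0 ≤ N j := fun j => norm_nonneg _
  have hB : ∀ B : ContinuousMultilinearMap 𝕜 (fun _ : Fin 2 => E) 𝕜,
      ∑ j, ‖B (z j)‖ ≤ C * V * ‖B‖ := fun B =>
    (show ∑ j, ‖B (z j)‖ ≤ C * ‖B‖ * V by
      simpa only [Real.rpow_one, div_one] using hbil B m fun i j => z j i).trans_eq
      (mul_right_comm _ _ _)
  have hG : ∀ G : ContinuousMultilinearMap 𝕜 (fun _ : Fin n => E) 𝕜,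
      ∑ j, N j ^ (p - 1) * ‖G (y j)‖ ≤ S ^ (1 - 1 / p) * K * W * ‖G‖ := fun G => calc
    _ ≤ S ^ (1 - 1 / p) * (∑ j, ‖G (y j)‖ ^ p) ^ (1 / p) :=
      Real.sum_rpow_sub_one_mul_le _ hp hN fun _ => norm_nonneg _
    _ ≤ S ^ (1 - 1 / p) * (K * ‖G‖ * W) := by gcongr; exact h G m fun i j => y j i
    _ = _ := by ring
  have hAyz : ∀ j, A.curryFinAdd (y j) (z j) = A (fun i => x i j) := fun j => by
    rw [ContinuousMultilinearMap.curryFinAdd_apply]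
    exact congrArg A (Fin.append_castAdd_natAdd (f := fun i => x i j))
  have hS : S ≤ (C * K * ‖A‖ * ∏ i, weakNorm 𝕜 r (x i)) * S ^ (1 - 1 / p) := by
    have := sum_mul_norm_apply_apply_le A.curryFinAdd y z
      (fun j => Real.rpow_nonneg (hN j) (p - 1)) (by positivity) (by positivity) hB hG
    simp only [hAyz, ContinuousMultilinearMap.norm_curryFinAdd] at this
    rw [Fin.prod_univ_add]
    calc S = ∑ j, N j ^ (p - 1) * N j := by
          simp only [Real.rpow_sub_one_mul_self (by linarith : p ≠ 0) (hN _), S]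
      _ ≤ _ := this
      _ = _ := by ring
  exact Real.rpow_one_div_le_of_le_mul_rpow (by linarith)
    (Finset.sum_nonneg fun j _ => Real.rpow_nonneg (hN j) p)
    (mul_nonneg (by positivity) (Finset.prod_nonneg fun i _ => weakNorm_nonneg _)) hS

lemma HasSummingConst.add_two_mul (hp : 1 ≤ p) (hC : 0 ≤ C) (hK : 0 ≤ K)
    (hbil : HasSummingConst 𝕜 E 1 r 2 C) (h : HasSummingConst 𝕜 E p r n K) (k : ℕ) :
    HasSummingConst 𝕜 E p r (n + 2 * k) (C ^ k * K) := by
  induction k with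
  | zero => simpa using h
  | succ k ih =>
    rw [show n + 2 * (k + 1) = n + 2 * k + 2 by ring, pow_succ', mul_assoc]
    exact add_two hp hC (by positivity) hbil ih

end Summing

theorem bilinear_to_multilinear_general {𝕜 : Type*} [RCLike 𝕜]
    (E : Type*) [NormedAddCommGroup E] [NormedSpace 𝕜 E]
    (r : ℝ) (hr1 : 1 ≤ r) (C : ℝ) (hC : 0 < C)
    (hbil : ∀ B : ContinuousMultilinearMap 𝕜 (fun _ : Fin 2 => E) 𝕜,
      ∀ (m : ℕ) (x : Fin 2 → Fin m → E),
        ∑ j, ‖B (fun i => x i j)‖ ≤ C * ‖B‖ * ∏ i, weakNorm 𝕜 r (x i)) :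
    (∀ n : ℕ, 2 ≤ n → Even n → ∀ A : ContinuousMultilinearMap 𝕜 (fun _ : Fin n => E) 𝕜,
      ∀ (m : ℕ) (x : Fin n → Fin m → E),
        ∑ j, ‖A (fun i => x i j)‖ ≤ C ^ (n / 2) * ‖A‖ * ∏ i, weakNorm 𝕜 r (x i)) ∧
    (∀ n : ℕ, 3 ≤ n → Odd n → ∀ A : ContinuousMultilinearMap 𝕜 (fun _ : Fin n => E) 𝕜,
      ∀ (m : ℕ) (x : Fin n → Fin m → E),
        (∑ j, ‖A (fun i => x i j)‖ ^ r) ^ (1 / r)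
          ≤ C ^ ((n - 1) / 2) * ‖A‖ * ∏ i, weakNorm 𝕜 r (x i)) := by
  have h2 : HasSummingConst 𝕜 E 1 r 2 C := fun B m x => by
    simpa only [Real.rpow_one, div_one] using hbil B m x
  constructor
  · intro n hn heven
    obtain ⟨k, rfl⟩ : ∃ k, n = 2 + 2 * k := ⟨n / 2 - 1, by obtain ⟨l, rfl⟩ := heven; omega⟩
    intro A m x
    rw [show (2 + 2 * k) / 2 = k + 1 by omega, pow_succ]
    simpa only [Real.rpow_one, div_one] using
      HasSummingConst.add_two_mul le_rfl hC.le hC.le h2 h2 k A m x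
  · intro n _ hodd
    obtain ⟨k, rfl⟩ : ∃ k, n = 1 + 2 * k := ⟨n / 2, by obtain ⟨l, rfl⟩ := hodd; omega⟩
    intro A m x
    rw [show (1 + 2 * k - 1) / 2 = k by omega]
    simpa only [mul_one] using HasSummingConst.add_two_mul hr1 hC.le zero_le_one h2
      (hasSummingConst_one (by linarith)) k A m x

/-- **From bilinear to multilinear coincidences.** If every continuous bilinear form on
`E × E` is absolutely `(1; r, r)`-summing with `π_{(1;r,r)}(B) ≤ C‖B‖` (for some
`1 ≤ r ≤ 2`), then for every even `n ≥ 2` every continuous `n`-linear form on `E` is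
absolutely `(1; r, …, r)`-summing with constant `C^{n/2}‖A‖`, and for every odd `n ≥ 3`
every continuous `n`-linear form on `E` is absolutely `(r; r, …, r)`-summing with constant
`C^{(n−1)/2}‖A‖`. -/
theorem bilinear_to_multilinear {𝕜 : Type*} [RCLike 𝕜]
    (E : Type*) [NormedAddCommGroup E] [NormedSpace 𝕜 E] [CompleteSpace E]
    (r : ℝ) (hr1 : 1 ≤ r) (hr2 : r ≤ 2) (C : ℝ) (hC : 0 < C)
    (hbil : ∀ B : ContinuousMultilinearMap 𝕜 (fun _ : Fin 2 => E) 𝕜,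
      ∀ (m : ℕ) (x : Fin 2 → Fin m → E),
        ∑ j, ‖B (fun i => x i j)‖ ≤ C * ‖B‖ * ∏ i, weakNorm 𝕜 r (x i)) :
    (∀ n : ℕ, 2 ≤ n → Even n → ∀ A : ContinuousMultilinearMap 𝕜 (fun _ : Fin n => E) 𝕜,
      ∀ (m : ℕ) (x : Fin n → Fin m → E),
        ∑ j, ‖A (fun i => x i j)‖ ≤ C ^ (n / 2) * ‖A‖ * ∏ i, weakNorm 𝕜 r (x i)) ∧
    (∀ n : ℕ, 3 ≤ n → Odd n → ∀ A : ContinuousMultilinearMap 𝕜 (fun _ : Fin n => E) 𝕜,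
      ∀ (m : ℕ) (x : Fin n → Fin m → E),
        (∑ j, ‖A (fun i => x i j)‖ ^ r) ^ (1 / r)
          ≤ C ^ ((n - 1) / 2) * ‖A‖ * ∏ i, weakNorm 𝕜 r (x i)) :=
  bilinear_to_multilinear_general E r hr1 C hC hbil
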